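/- Let Z : 𝕂 × 𝕂 → A_X be a cotranslation such that for every r ∈ 𝕂 the map t ↦ Z(r, t) is differentiable. Then for every t, the map r ↦ Z(r, t) is differentiable and ∂₁Z(r, t) = ∂₂Z(r, t) − Z(r, t) ∘ ∂₂Z(r, 0). -/

import Mathlib

/-!
Fix `r`. Putting `s = u - r` in the cotranslation identity gives
`Z(u, t) = Z(r, t + (u - r)) ∘ Z(r, u - r)⁻¹`, where both factors are differentiable in `u`
by hypothesis (the inverse being differentiable as the inverse of a differentiable family of
units). The product rule at `u = r`, with `Z(r, 0) = 1`, gives the formula.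
-/

open Filter Topology

def IsCotranslation {A G : Type*} [Add A] [Mul G] (Z : A → A → G) : Prop :=
  ∀ r s t : A, Z r (t + s) = Z (s + r) t * Z r s

namespace IsCotranslation

variable {A G : Type*}

theorem apply_zero [AddZeroClass A] [LeftCancelMonoid G] {Z : A → A → G}
    (hZ : IsCotranslation Z) (r : A) : Z r 0 = 1 := by
  have h := hZ r 0 0
  rw [add_zero, zero_add] at h
  exact (mul_eq_left.mp h.symm)

theorem eq_mul_inv [AddGroup A] [Group G] {Z : A → A → G} (hZ : IsCotranslation Z)
    (r u t : A) : Z u t = Z r (t + (u - r)) * (Z r (u - r))⁻¹ := by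
  rw [hZ, sub_add_cancel, mul_inv_cancel_right]

theorem map {F H : Type*} [Add A] [Mul G] [Mul H] [FunLike F G H] [MulHomClass F G H]
    {Z : A → A → G} (hZ : IsCotranslation Z) (f : F) :
    IsCotranslation fun r s => f (Z r s) := fun r s t => by
  simp only [hZ r s t, map_mul]

end IsCotranslation

section UnitsInverse

variable {𝕜 R : Type*} [NontriviallyNormedField 𝕜] [NormedRing R] [NormedAlgebra 𝕜 R]

theorem Units.val_inv_sub_val_inv (a b : Rˣ) :
    (↑a⁻¹ - ↑b⁻¹ : R) = -(↑a⁻¹ * (↑a - ↑b) * ↑b⁻¹) := by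
  rw [mul_sub, sub_mul, Units.inv_mul, one_mul, mul_assoc, Units.mul_inv, mul_one, neg_sub]

/- Unlike `NormedRing.inverse_continuousAt`, this needs no completeness of `R`: the inverses
are given, only their norms have to be controlled. -/
theorem Units.tendsto_val_inv {α : Type*} {l : Filter α} {e : α → Rˣ} {a : Rˣ}
    (he : Tendsto (fun u => (e u : R)) l (𝓝 a)) :
    Tendsto (fun u => (↑(e u)⁻¹ : R)) l (𝓝 ↑a⁻¹) := by
  set c : R := ↑a⁻¹
  have hsmall : Tendsto (fun u => ‖(e u : R) - a‖) l (𝓝 0) :=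
    tendsto_iff_norm_sub_tendsto_zero.mp he
  -- `(e u)⁻¹ = c - (e u)⁻¹ (e u - a) c` bounds `‖(e u)⁻¹‖` by `2 ‖c‖` once `e u` is close to `a`
  have hbound : ∀ᶠ u in l, ‖(↑(e u)⁻¹ : R)‖ ≤ 2 * ‖c‖ := by
    have hc : ∀ᶠ u in l, ‖(e u : R) - a‖ * ‖c‖ ≤ 1 / 2 := by
      have := hsmall.mul_const ‖c‖
      rw [zero_mul] at this
      exact this.eventually (ge_mem_nhds (by norm_num))
    filter_upwards [hc] with u hu
    have : ‖(↑(e u)⁻¹ : R)‖ ≤ ‖c‖ + ‖(↑(e u)⁻¹ : R)‖ * (‖(e u : R) - a‖ * ‖c‖) := by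
      calc ‖(↑(e u)⁻¹ : R)‖ = ‖c + (↑(e u)⁻¹ - c)‖ := by rw [add_sub_cancel]
        _ ≤ ‖c‖ + ‖(↑(e u)⁻¹ : R) - c‖ := norm_add_le _ _
        _ = ‖c‖ + ‖(↑(e u)⁻¹ : R) * (↑(e u) - ↑a) * c‖ := by
          rw [Units.val_inv_sub_val_inv, norm_neg]
        _ ≤ _ := by grw [norm_mul_le, norm_mul_le, mul_assoc]
    nlinarith [norm_nonneg (↑(e u)⁻¹ : R)]
  rw [tendsto_iff_norm_sub_tendsto_zero]
  refine squeeze_zero' (.of_forall fun _ => norm_nonneg _) ?_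
    (by simpa using (hsmall.const_mul (2 * ‖c‖)).mul_const ‖c‖)
  filter_upwards [hbound] with u hu
  calc ‖(↑(e u)⁻¹ : R) - c‖ = ‖(↑(e u)⁻¹ : R) * (↑(e u) - ↑a) * c‖ := by
        rw [Units.val_inv_sub_val_inv, norm_neg]
    _ ≤ ‖(↑(e u)⁻¹ : R)‖ * ‖(e u : R) - a‖ * ‖c‖ := by grw [norm_mul_le, norm_mul_le]
    _ ≤ 2 * ‖c‖ * ‖(e u : R) - a‖ * ‖c‖ := by gcongr

theorem Units.hasDerivAt_val_inv {e : 𝕜 → Rˣ} {f' : R} {x : 𝕜}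
    (he : HasDerivAt (fun u => (e u : R)) f' x) :
    HasDerivAt (fun u => (↑(e u)⁻¹ : R)) (-(↑(e x)⁻¹ * f' * ↑(e x)⁻¹)) x := by
  have hinv := Units.tendsto_val_inv (l := 𝓝[≠] x)
    (he.continuousAt.tendsto.mono_left nhdsWithin_le_nhds)
  rw [hasDerivAt_iff_tendsto_slope] at he ⊢
  have hslope : ∀ u, slope (fun u => (↑(e u)⁻¹ : R)) x u
      = -(↑(e u)⁻¹ * slope (fun u => (e u : R)) x u * ↑(e x)⁻¹) := by
    intro u
    simp only [slope_def_module, Units.val_inv_sub_val_inv, smul_neg, mul_smul_comm,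
      smul_mul_assoc]
  exact ((hinv.mul he).mul_const _).neg.congr fun u => (hslope u).symm

end UnitsInverse

theorem HasDerivAt.comp_sub_add {𝕜 F : Type*} [NontriviallyNormedField 𝕜] [NormedAddCommGroup F]
    [NormedSpace 𝕜 F] {f : 𝕜 → F} {f' : F} {t : 𝕜} (hf : HasDerivAt f f' t) (r : 𝕜) :
    HasDerivAt (fun u => f (t + (u - r))) f' r := by
  have := HasDerivAt.comp_add_const r (t - r) (by rwa [add_sub_cancel])
  simpa only [add_sub_left_comm, add_sub_assoc'] using this

/-- If a cotranslation `Z` is differentiable in the second argument (with derivative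
`D r t`), then it is differentiable in the first argument and
`∂₁Z(r,t) = ∂₂Z(r,t) − Z(r,t) ∘ ∂₂Z(r,0)`. -/
theorem stmt_11 {𝕂 X : Type*} [RCLike 𝕂] [NormedAddCommGroup X] [NormedSpace 𝕂 X]
    (Z : 𝕂 → 𝕂 → (X ≃L[𝕂] X))
    (hZ : ∀ r s t : 𝕂, Z r (t + s) = Z (s + r) t * Z r s)
    (D : 𝕂 → 𝕂 → (X →L[𝕂] X))
    (hD : ∀ r t : 𝕂, HasDerivAt (fun s => ((Z r s : X →L[𝕂] X))) (D r t) t) :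
    ∀ r t : 𝕂, HasDerivAt (fun u => ((Z u t : X →L[𝕂] X)))
      (D r t - ((Z r t : X →L[𝕂] X)).comp (D r 0)) r := by
  intro r t
  let W : 𝕂 → 𝕂 → (X →L[𝕂] X)ˣ := fun u s => (ContinuousLinearEquiv.unitsEquiv 𝕂 X).symm (Z u s)
  have hW : IsCotranslation W := IsCotranslation.map hZ _
  have hZW : (fun u => (Z u t : X →L[𝕂] X))
      = fun u => (W r (t + (u - r)) : X →L[𝕂] X) * ↑(W r (u - r))⁻¹ := by
    ext1 u
    rw [← Units.val_mul, ← hW.eq_mul_inv]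
    rfl
  have hW0 : W r 0 = 1 := hW.apply_zero r
  have hZshift := (hD r 0).comp_sub_add r
  simp only [zero_add] at hZshift
  have hinv := Units.hasDerivAt_val_inv (e := fun u => W r (u - r)) hZshift
  rw [hZW]
  refine (((hD r t).comp_sub_add r).mul hinv).congr_deriv ?_
  rw [sub_self, add_zero, hW0, inv_one, Units.val_one, mul_one, one_mul, mul_one, mul_neg,
    ← sub_eq_add_neg]
  rfl
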